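/- arXiv:1107.2846 — 3 statements merged into one kernel-verified Lean document; each statement's English description precedes it below -/
import Mathlib

section
/- If P is a finite poset of order dimension d ≥ 2 that is not a chain, then led(P) ≥ (2/d)·inc(P), where led(P) is the linear extension diameter, i.e., RR(P) ≥ 2/d. -/
/-- `L` is a linear extension of the partial order on `α`. -/
def IsLinearExtension {α : Type*} [PartialOrder α] (L : LinearOrder α) : Prop :=
  ∀ x y : α, x ≤ y → L.le x y

/-- The distance between two linear orders: the number of ordered pairs `(x,y)`
with `x < y` in `L1` and `y < x` in `L2`. -/
noncomputable def extDist {α : Type*} (L1 L2 : LinearOrder α) : ℕ :=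
  {p : α × α | L1.lt p.1 p.2 ∧ L2.lt p.2 p.1}.ncard

/-- The number of unordered incomparable pairs of the poset `α`. -/
noncomputable def numInc (α : Type*) [PartialOrder α] : ℕ :=
  {p : α × α | ¬ p.1 ≤ p.2 ∧ ¬ p.2 ≤ p.1}.ncard / 2

/-- A family of `d` linear extensions is a realizer if the intersection of the
linear extensions is exactly the partial order. -/
def IsRealizer {α : Type*} [PartialOrder α] {d : ℕ} (R : Fin d → LinearOrder α) : Prop :=
  (∀ i, IsLinearExtension (R i)) ∧ ∀ x y : α, (∀ i, (R i).le x y) → x ≤ y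

/-!
Fix a realizer `R 0, …, R (d-1)`. An incomparable ordered pair `(x, y)` has `x < y` in `a ≥ 1` of
the `R i` and `y < x` in the other `b = d - a ≥ 1`, so it is reversed between `R i` and `R j` for
`a * b ≥ d - 1` ordered pairs `(i, j)`. Double counting gives
`∑_{i ≠ j} dist (R i) (R j) ≥ (d - 1) · 2 inc(P)`, and the largest of these `d (d - 1)` distances
is at least the average, `2 inc(P) / d`.
-/

open Finset

section LinearExtensionDiameter

variable {α : Type*}

lemma extDist_self (L : LinearOrder α) : extDist L L = 0 := by
  rw [extDist, ← Set.ncard_empty (α × α)]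
  congr
  exact Set.eq_empty_of_forall_notMem fun p hp => @lt_asymm α L.toPreorder _ _ hp.1 hp.2

lemma extDist_eq_card [Fintype α] (L1 L2 : LinearOrder α)
    [DecidablePred fun p : α × α => L1.lt p.1 p.2 ∧ L2.lt p.2 p.1] :
    extDist L1 L2 = #{p : α × α | L1.lt p.1 p.2 ∧ L2.lt p.2 p.1} := by
  simp only [extDist, ← Set.ncard_coe_finset, coe_filter, mem_univ, true_and]

lemma two_mul_numInc_le [Fintype α] [PartialOrder α] [DecidableLE α] :
    2 * numInc α ≤ #{p : α × α | ¬ p.1 ≤ p.2 ∧ ¬ p.2 ≤ p.1} := by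
  simp only [numInc, ← Set.ncard_coe_finset, coe_filter, mem_univ, true_and]
  exact Nat.mul_div_le _ 2

section Family

variable {ι : Type*} [Fintype ι] (R : ι → LinearOrder α)

lemma card_lt_add_card_gt {x y : α} (hxy : x ≠ y) :
    #{i | (R i).lt x y} + #{i | (R i).lt y x} = Fintype.card ι := by
  have hgt : ∀ i, (R i).lt y x ↔ ¬ (R i).lt x y := fun i =>
    ⟨@lt_asymm α (R i).toPreorder _ _, (@lt_or_gt_of_ne α (R i) _ _ hxy).resolve_left⟩
  simp only [hgt]
  exact card_filter_add_card_filter_not _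

lemma card_reversing_eq_mul (x y : α) :
    #{q : ι × ι | (R q.1).lt x y ∧ (R q.2).lt y x} = #{i | (R i).lt x y} * #{i | (R i).lt y x} := by
  rw [← card_product, ← filter_product, univ_product_univ]

lemma sum_extDist_eq_sum_card [Fintype α] :
    ∑ q : ι × ι, extDist (R q.1) (R q.2) =
      ∑ p : α × α, #{q : ι × ι | (R q.1).lt p.1 p.2 ∧ (R q.2).lt p.2 p.1} := by
  simp only [extDist_eq_card, card_filter]
  rw [sum_comm]

lemma sum_offDiag_extDist :
    ∑ q ∈ univ.offDiag, extDist (R q.1) (R q.2) = ∑ q : ι × ι, extDist (R q.1) (R q.2) :=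
  sum_subset (subset_univ _) fun ⟨i, j⟩ _ hij => by
    obtain rfl : i = j := by simpa using hij
    exact extDist_self _

end Family

namespace IsRealizer

variable [PartialOrder α] {d : ℕ} {R : Fin d → LinearOrder α}

lemma exists_lt_of_not_le (hR : IsRealizer R) {x y : α} (h : ¬ y ≤ x) : ∃ i, (R i).lt x y := by
  by_contra! hle
  exact h (hR.2 y x hle)

lemma sub_one_le_card_reversing (hR : IsRealizer R) {x y : α} (hxy : ¬ x ≤ y) (hyx : ¬ y ≤ x) :
    d - 1 ≤ #{q : Fin d × Fin d | (R q.1).lt x y ∧ (R q.2).lt y x} := by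
  have hsum := card_lt_add_card_gt R (ne_of_not_le hxy)
  obtain ⟨i, hi⟩ := hR.exists_lt_of_not_le hyx
  obtain ⟨j, hj⟩ := hR.exists_lt_of_not_le hxy
  have hpos_xy : 0 < #{i | (R i).lt x y} := card_pos.2 ⟨i, mem_filter.2 ⟨mem_univ _, hi⟩⟩
  have hpos_yx : 0 < #{i | (R i).lt y x} := card_pos.2 ⟨j, mem_filter.2 ⟨mem_univ _, hj⟩⟩
  rw [card_reversing_eq_mul]
  calc d - 1 = #{i | (R i).lt x y} + #{i | (R i).lt y x} - 1 := by rw [hsum, Fintype.card_fin]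
    _ ≤ _ := Nat.add_sub_one_le_mul hpos_xy.ne' hpos_yx.ne'

lemma sub_one_mul_card_inc_le_sum_extDist [Fintype α] [DecidableLE α] (hR : IsRealizer R) :
    (d - 1) * #{p : α × α | ¬ p.1 ≤ p.2 ∧ ¬ p.2 ≤ p.1} ≤
      ∑ q ∈ univ.offDiag, extDist (R q.1) (R q.2) := by
  rw [sum_offDiag_extDist, sum_extDist_eq_sum_card]
  calc (d - 1) * #{p : α × α | ¬ p.1 ≤ p.2 ∧ ¬ p.2 ≤ p.1}
      = ∑ p : α × α with ¬ p.1 ≤ p.2 ∧ ¬ p.2 ≤ p.1, (d - 1) := by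
        rw [sum_const, smul_eq_mul, mul_comm]
    _ ≤ ∑ p : α × α with ¬ p.1 ≤ p.2 ∧ ¬ p.2 ≤ p.1,
          #{q : Fin d × Fin d | (R q.1).lt p.1 p.2 ∧ (R q.2).lt p.2 p.1} :=
        sum_le_sum fun _ hp => hR.sub_one_le_card_reversing (mem_filter.1 hp).2.1
          (mem_filter.1 hp).2.2
    _ ≤ _ := sum_le_sum_of_subset (filter_subset _ _)

lemma exists_card_inc_le_mul_extDist [Fintype α] [DecidableLE α] (hR : IsRealizer R)
    (hd : 2 ≤ d) :
    ∃ i j, #{p : α × α | ¬ p.1 ≤ p.2 ∧ ¬ p.2 ≤ p.1} ≤ d * extDist (R i) (R j) := by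
  have hne : (univ.offDiag : Finset (Fin d × Fin d)).Nonempty :=
    ⟨(⟨0, by omega⟩, ⟨1, by omega⟩), by simp [Fin.ext_iff]⟩
  obtain ⟨q, -, hmax⟩ := univ.offDiag.exists_max_image (fun q => extDist (R q.1) (R q.2)) hne
  refine ⟨q.1, q.2, Nat.le_of_mul_le_mul_left ?_ (by omega : 0 < d - 1)⟩
  calc (d - 1) * _ ≤ ∑ q ∈ univ.offDiag, extDist (R q.1) (R q.2) :=
        hR.sub_one_mul_card_inc_le_sum_extDist
    _ ≤ #(univ.offDiag : Finset (Fin d × Fin d)) * extDist (R q.1) (R q.2) :=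
        sum_le_card_nsmul _ _ _ hmax
    _ = (d - 1) * (d * extDist (R q.1) (R q.2)) := by
        rw [offDiag_card, card_univ, Fintype.card_fin, ← Nat.mul_sub_one, mul_comm d, mul_assoc]

end IsRealizer

end LinearExtensionDiameter

theorem led_ge_two_div_dim_general {α : Type*} [Fintype α] [PartialOrder α] (d : ℕ) (hd : 2 ≤ d)
    (hdim_le : ∃ R : Fin d → LinearOrder α, IsRealizer R) :
    ∃ L1 L2 : LinearOrder α, IsLinearExtension L1 ∧ IsLinearExtension L2 ∧
      2 * numInc α ≤ d * extDist L1 L2 := by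
  classical
  obtain ⟨R, hR⟩ := hdim_le
  obtain ⟨i, j, hij⟩ := hR.exists_card_inc_le_mul_extDist hd
  exact ⟨R i, R j, hR.1 i, hR.1 j, two_mul_numInc_le.trans hij⟩

/-- If a finite poset that is not a chain has order dimension exactly `d ≥ 2`, then
`led(P) ≥ (2/d)·inc(P)`: there exist linear extensions `L1, L2` with
`2·inc(P) ≤ d·dist(L1,L2)`, i.e. `RR(P) ≥ 2/d`. -/
theorem led_ge_two_div_dim {α : Type*} [Fintype α] [PartialOrder α] (d : ℕ) (hd : 2 ≤ d)
    (hnotchain : ∃ x y : α, ¬ x ≤ y ∧ ¬ y ≤ x)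
    (hdim_le : ∃ R : Fin d → LinearOrder α, IsRealizer R)
    (hdim_ge : ∀ e < d, ¬ ∃ R : Fin e → LinearOrder α, IsRealizer R) :
    ∃ L1 L2 : LinearOrder α, IsLinearExtension L1 ∧ IsLinearExtension L2 ∧
      2 * numInc α ≤ d * extDist L1 L2 :=
  led_ge_two_div_dim_general d hd hdim_le
end

section
/- For t ≥ 3 and k ≥ 3, led(Z_{t,k}) ≥ (t − 1 + ⌈(t−2)/2⌉)·C(k,2), and consequently RR(Z_{t,k}) ≥ (t − 1 + ⌈(t−2)/2⌉)/(2t−3) ≥ 3/4. -/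
/-- The order of the poset `Z_{t,k}`: element `a_{i,j}` is coded as `(i,j) : Fin t × Fin k`.
Blocks at distance at least 3 are fully comparable; within a block and between blocks at
distance 1 or 2 we have `a_{i,j} ≤ a_{i',j'}` iff `j ≤ j'`.  This is the transitive
closure of the chains within blocks, the covers `a_{i,j} < a_{i+1,j}`, and full
comparability between sufficiently distant blocks. -/
def Zle (t k : ℕ) (x y : Fin t × Fin k) : Prop :=
  ((x.1 : ℕ) ≤ y.1 ∧ (y.1 : ℕ) ≤ (x.1 : ℕ) + 2 ∧ (x.2 : ℕ) ≤ y.2) ∨ (x.1 : ℕ) + 3 ≤ y.1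

/-- `Z_{t,k}` as a partial order on `Fin t × Fin k`. -/
def Zorder (t k : ℕ) : PartialOrder (Fin t × Fin k) where
  le := Zle t k
  lt a b := Zle t k a b ∧ ¬ Zle t k b a
  lt_iff_le_not_ge _ _ := Iff.rfl
  le_refl x := Or.inl ⟨le_refl _, by omega, le_refl _⟩
  le_trans x y z hxy hyz := by
    rcases hxy with ⟨a1, a2, a3⟩ | a
    · rcases hyz with ⟨b1, b2, b3⟩ | b
      · by_cases hz : (z.1 : ℕ) ≤ (x.1 : ℕ) + 2
        · exact Or.inl ⟨by omega, hz, by omega⟩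
        · exact Or.inr (by omega)
      · exact Or.inr (by omega)
    · rcases hyz with ⟨b1, b2, b3⟩ | b
      · exact Or.inr (by omega)
      · exact Or.inr (by omega)
  le_antisymm x y hxy hyx := by
    rcases hxy with ⟨a1, a2, a3⟩ | a
    · rcases hyx with ⟨b1, b2, b3⟩ | b
      · have h1 : x.1 = y.1 := Fin.ext (by omega)
        have h2 : x.2 = y.2 := Fin.ext (by omega)
        exact Prod.ext h1 h2
      · omega
    · rcases hyx with ⟨b1, b2, b3⟩ | b
      · omega
      · omega

/-!
Order the elements of `Z_{t,k}` by the group of their block, then by level, then by block, for a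
grouping of the blocks into runs of at most three consecutive ones. This is a linear extension,
because comparable elements of blocks at distance at most two have levels in the same order and
blocks at distance at least three lie in different groups. If two blocks `i < i'` share a group
in one such extension but not in the other, then for every pair of levels `j₁ < j₂` the elements
`(i, j₂)` and `(i', j₁)` are ordered differently by the two, which gives `C(k,2)` reversed pairs
per such pair of blocks. Two groupings offset by two blocks split all `t - 1` consecutive pairs
and the `⌊(t-1)/2⌋` pairs `(2m, 2m+2)`, and `3(2t-3) ≤ 4(t - 1 + ⌊(t-1)/2⌋)`.
-/

open Finset Function

/-- Blocks with equal `g`-value are entangled (interleaved level by level), the others are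
separated. -/
def entangledOrder (t k : ℕ) (g : ℕ → ℕ) : LinearOrder (Fin t × Fin k) :=
  LinearOrder.lift' (fun x => toLex (g x.1, toLex x.swap)) fun _ _ h =>
    Prod.swap_injective (toLex.injective (congrArg (fun p => (ofLex p).2) h))

section entangledOrder

variable {t k : ℕ} {g : ℕ → ℕ} {x y : Fin t × Fin k}

theorem entangledOrder_lt_of_lt (h : g x.1 < g y.1) : (entangledOrder t k g).lt x y :=
  Prod.Lex.toLex_lt_toLex.2 (Or.inl h)

theorem entangledOrder_lt_of_eq_of_lt (h : g x.1 = g y.1) (hj : x.2 < y.2) :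
    (entangledOrder t k g).lt x y :=
  Prod.Lex.toLex_lt_toLex.2 (Or.inr ⟨h, Prod.Lex.toLex_lt_toLex.2 (Or.inl hj)⟩)

theorem isLinearExtension_entangledOrder (hg : Monotone g) (hg3 : ∀ i, g i < g (i + 3)) :
    @IsLinearExtension _ (Zorder t k) (entangledOrder t k g) := by
  rintro x y (⟨hi, -, hj⟩ | hfar)
  · rcases (hg hi).lt_or_eq with hlt | heq
    · exact Prod.Lex.toLex_le_toLex.2 (Or.inl hlt)
    · exact Prod.Lex.toLex_le_toLex.2 (Or.inr ⟨heq, Prod.Lex.toLex_mono ⟨hj, hi⟩⟩)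
  · exact Prod.Lex.toLex_le_toLex.2 (Or.inl ((hg3 _).trans_le (hg hfar)))

end entangledOrder

def EntangledInExactlyOne (g₁ g₂ : ℕ → ℕ) (i i' : ℕ) : Prop :=
  (g₁ i = g₁ i' ∧ g₂ i < g₂ i') ∨ (g₂ i = g₂ i' ∧ g₁ i < g₁ i')

section extDist

variable {t k : ℕ} {g₁ g₂ : ℕ → ℕ}

theorem entangledOrder_lt_and_lt_of_eq_of_lt {i i' : Fin t} {j₁ j₂ : Fin k}
    (h₁ : g₁ i = g₁ i') (h₂ : g₂ i < g₂ i') (hj : j₁ < j₂) :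
    (entangledOrder t k g₁).lt (i', j₁) (i, j₂) ∧ (entangledOrder t k g₂).lt (i, j₂) (i', j₁) :=
  ⟨entangledOrder_lt_of_eq_of_lt h₁.symm hj, entangledOrder_lt_of_lt h₂⟩

theorem card_mul_choose_two_le_extDist {ι : Type*} [Fintype ι] (b : ι → Fin t × Fin t)
    (hb : Injective b) (hpair : ∀ a, EntangledInExactlyOne g₁ g₂ (b a).1 (b a).2) :
    Fintype.card ι * k.choose 2 ≤ extDist (entangledOrder t k g₁) (entangledOrder t k g₂) := by
  classical
  let P : Finset (Fin k × Fin k) := {p | p.1 < p.2}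
  let D : Finset (ι × (Fin k × Fin k)) := univ ×ˢ P
  let F : ι × (Fin k × Fin k) → (Fin t × Fin k) × (Fin t × Fin k) := fun ⟨a, j₁, j₂⟩ =>
    if g₁ (b a).1 = g₁ (b a).2 then (((b a).2, j₁), ((b a).1, j₂))
    else (((b a).1, j₂), ((b a).2, j₁))
  have hF : ∀ x ∈ (D : Set (ι × (Fin k × Fin k))), F x ∈
      {p | (entangledOrder t k g₁).lt p.1 p.2 ∧ (entangledOrder t k g₂).lt p.2 p.1} := by
    rintro ⟨a, j₁, j₂⟩ hx
    have hj : j₁ < j₂ := by simpa [D, P] using hx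
    simp only [F, Set.mem_ofPred_eq]
    split_ifs with h
    · exact entangledOrder_lt_and_lt_of_eq_of_lt h ((hpair a).resolve_right (by omega)).2 hj
    · obtain ⟨h₂, h₁⟩ := (hpair a).resolve_left (by omega)
      exact (entangledOrder_lt_and_lt_of_eq_of_lt h₂ h₁ hj).symm
  have hFinj : Set.InjOn F (D : Set (ι × (Fin k × Fin k))) := by
    rintro ⟨a, j₁, j₂⟩ - ⟨a', j₁', j₂'⟩ - h
    simp only [F] at h
    split_ifs at h with ha ha' ha' <;> simp only [Prod.mk.injEq] at h
    · obtain ⟨⟨h₂, rfl⟩, h₁, rfl⟩ := h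
      rw [hb (Prod.ext h₁ h₂)]
    · rw [← h.1.1, ← h.2.1] at ha'
      exact absurd ha.symm ha'
    · rw [← h.1.1, ← h.2.1] at ha'
      exact absurd ha' (Ne.symm ha)
    · obtain ⟨⟨h₁, rfl⟩, h₂, rfl⟩ := h
      rw [hb (Prod.ext h₁ h₂)]
  calc Fintype.card ι * k.choose 2 = #D := by
        simp [D, P, Fintype.card_product_filter_lt]
    _ = (D : Set (ι × (Fin k × Fin k))).ncard := (Set.ncard_coe_finset _).symm
    _ ≤ extDist _ _ := Set.ncard_le_ncard_of_injOn F hF hFinj (Set.toFinite _)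

end extDist

/-- Groups the blocks as `{0,1,2}, {3}, {4,5,6}, {7}, …`; shifted by two it groups them as
`{0}, {1}, {2,3,4}, {5}, …`, so that each pair `(i, i+1)` and each pair `(2m, 2m+2)` is entangled
in exactly one of the two. -/
def blockGroup (i : ℕ) : ℕ := i / 4 + (i + 1) / 4

theorem blockGroup_monotone : Monotone blockGroup := fun _ _ h => by
  unfold blockGroup; omega

theorem blockGroup_lt_add_three (i : ℕ) : blockGroup i < blockGroup (i + 3) := by
  unfold blockGroup; omega

theorem entangledInExactlyOne_blockGroup_succ (i : ℕ) :
    EntangledInExactlyOne (fun i => blockGroup (i + 2)) blockGroup i (i + 1) := by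
  simp only [EntangledInExactlyOne, blockGroup]; omega

theorem entangledInExactlyOne_blockGroup_two_mul (m : ℕ) :
    EntangledInExactlyOne (fun i => blockGroup (i + 2)) blockGroup (2 * m) (2 * m + 2) := by
  simp only [EntangledInExactlyOne, blockGroup]; omega

def switchedBlockPair (t : ℕ) : Fin (t - 1) ⊕ Fin ((t - 1) / 2) → Fin t × Fin t
  | .inl i => (⟨i, by omega⟩, ⟨i + 1, by omega⟩)
  | .inr m => (⟨2 * m, by omega⟩, ⟨2 * m + 2, by omega⟩)

theorem switchedBlockPair_injective (t : ℕ) : Injective (switchedBlockPair t) := by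
  rintro (i | m) (i' | m') h <;>
    simp only [switchedBlockPair, Prod.ext_iff, Fin.ext_iff] at h <;> grind

theorem led_Z_lower_bound_general (t k : ℕ) :
    ∃ L1 L2 : LinearOrder (Fin t × Fin k),
      @IsLinearExtension _ (Zorder t k) L1 ∧ @IsLinearExtension _ (Zorder t k) L2 ∧
      (t - 1 + (t - 1) / 2) * k.choose 2 ≤ extDist L1 L2 ∧
      3 * ((2 * t - 3) * k.choose 2) ≤ 4 * extDist L1 L2 := by
  set L1 := entangledOrder t k (fun i => blockGroup (i + 2))
  set L2 := entangledOrder t k blockGroup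
  have hdist : (t - 1 + (t - 1) / 2) * k.choose 2 ≤ extDist L1 L2 := by
    simpa using card_mul_choose_two_le_extDist (switchedBlockPair t)
      (switchedBlockPair_injective t) fun
        | .inl i => entangledInExactlyOne_blockGroup_succ i
        | .inr m => entangledInExactlyOne_blockGroup_two_mul m
  have hratio : 3 * (2 * t - 3) ≤ 4 * (t - 1 + (t - 1) / 2) := by omega
  refine ⟨L1, L2, isLinearExtension_entangledOrder (blockGroup_monotone.comp add_left_mono)
    (fun i => blockGroup_lt_add_three (i + 2)),
    isLinearExtension_entangledOrder blockGroup_monotone blockGroup_lt_add_three, hdist, ?_⟩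
  calc 3 * ((2 * t - 3) * k.choose 2) ≤ 4 * ((t - 1 + (t - 1) / 2) * k.choose 2) := by
        rw [← mul_assoc, ← mul_assoc]; exact Nat.mul_le_mul_right _ hratio
    _ ≤ _ := Nat.mul_le_mul_left 4 hdist

/-- For `t, k ≥ 3`, `led(Z_{t,k}) ≥ (t − 1 + ⌈(t−2)/2⌉)·C(k,2)` (note
`⌈(t−2)/2⌉ = (t−1)/2` in natural-number division), and consequently
`RR(Z_{t,k}) ≥ (t − 1 + ⌈(t−2)/2⌉)/(2t−3) ≥ 3/4`, i.e. `4·dist ≥ 3·inc` where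
`inc(Z_{t,k}) = (2t−3)·C(k,2)`. -/
theorem led_Z_lower_bound (t k : ℕ) (ht : 3 ≤ t) (hk : 3 ≤ k) :
    ∃ L1 L2 : LinearOrder (Fin t × Fin k),
      @IsLinearExtension _ (Zorder t k) L1 ∧ @IsLinearExtension _ (Zorder t k) L2 ∧
      (t - 1 + (t - 1) / 2) * k.choose 2 ≤ extDist L1 L2 ∧
      3 * ((2 * t - 3) * k.choose 2) ≤ 4 * extDist L1 L2 :=
  led_Z_lower_bound_general t k
end

section
/- In the poset W_k (a stack of k standard examples S_3), no pair of linear extensions reverses all 6 of the incomparable pairs (a_i,b_i), (a_i,c_i), (b_i,c_i), (a_{i−1},b_i), (b_{i−1},c_i), (c_{i−1},a_i) for a fixed i ≥ 1; hence led(W_k) ≤ 5k + 3 while inc(W_k) = 6k + 3, giving RR(W_k) ≤ (5k+3)/(6k+3). -/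
/-- A pair of linear orders reverses the incomparable pair `{x,y}` if the pair appears
in opposite orders in the two linear orders. -/
def Reverses {α : Type*} (L1 L2 : LinearOrder α) (x y : α) : Prop :=
  (L1.lt x y ∧ L2.lt y x) ∨ (L1.lt y x ∧ L2.lt x y)

/-- The order of `W_k`, the stack of `k` standard examples: elements `a_i, b_i, c_i`
are coded as `(i,0), (i,1), (i,2) : Fin (k+1) × Fin 3`.  Each level is an antichain,
levels at distance at least 2 are fully comparable, and all of level `i` is below all
of level `i+1` except for the three incomparable pairs `(a_i, b_{i+1})`,
`(b_i, c_{i+1})`, `(c_i, a_{i+1})`. -/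
def Wle (k : ℕ) (x y : Fin (k + 1) × Fin 3) : Prop :=
  x = y ∨ ((y.1 : ℕ) = (x.1 : ℕ) + 1 ∧ (y.2 : ℕ) ≠ ((x.2 : ℕ) + 1) % 3) ∨
    (x.1 : ℕ) + 2 ≤ y.1

/-- `W_k` as a partial order. -/
def Worder (k : ℕ) : PartialOrder (Fin (k + 1) × Fin 3) where
  le := Wle k
  lt a b := Wle k a b ∧ ¬ Wle k b a
  lt_iff_le_not_ge _ _ := Iff.rfl
  le_refl x := Or.inl rfl
  le_trans x y z hxy hyz := by
    rcases hxy with rfl | (⟨a1, a2⟩ | a)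
    · exact hyz
    · rcases hyz with rfl | (⟨b1, b2⟩ | b)
      · exact Or.inr (Or.inl ⟨a1, a2⟩)
      · exact Or.inr (Or.inr (by omega))
      · exact Or.inr (Or.inr (by omega))
    · rcases hyz with rfl | (⟨b1, b2⟩ | b)
      · exact Or.inr (Or.inr a)
      · exact Or.inr (Or.inr (by omega))
      · exact Or.inr (Or.inr (by omega))
  le_antisymm x y hxy hyx := by
    rcases hxy with rfl | (⟨a1, a2⟩ | a)
    · rfl
    · rcases hyx with rfl | (⟨b1, b2⟩ | b)
      · rfl
      · omega
      · omega
    · rcases hyx with rfl | (⟨b1, b2⟩ | b)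
      · rfl
      · omega
      · omega

/-!
Fix linear extensions `L1`, `L2` of `W_k` and a level `i + 1 ≤ k`. Let `y` be the element of
level `i + 1` lying `L1`-between the other two, `x` and `z`, and let `w` be the element of level
`i` incomparable to `y`; then `w` lies below both `x` and `z`. If `{y, z}` and `{w, y}` were both
reversed we would get `z <₂ y <₂ w`, contradicting `w ≤ z`. So each of the `k` blocks of six
incomparable pairs contains an unreversed pair, and these pairs are distinct because their top
levels differ. Orienting all `6k + 3` incomparable pairs by `L1`, the reversed ones and these `k`
unreversed ones are disjoint, whence `led(W_k) ≤ 5k + 3`.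
-/

open Finset

section LinearExtension

variable {α : Type*} [PartialOrder α] {L1 L2 : LinearOrder α}

lemma incomparable_of_lt_of_lt (hL1 : IsLinearExtension L1) (hL2 : IsLinearExtension L2)
    {x y : α} (h1 : L1.lt x y) (h2 : L2.lt y x) : ¬ x ≤ y ∧ ¬ y ≤ x :=
  ⟨fun h => @not_le_of_gt _ L2.toPreorder _ _ h2 (hL2 x y h),
    fun h => @not_le_of_gt _ L1.toPreorder _ _ h1 (hL1 y x h)⟩

lemma numInc_eq_ncard_lt [Finite α] (L : LinearOrder α) :
    numInc α = {p : α × α | (¬ p.1 ≤ p.2 ∧ ¬ p.2 ≤ p.1) ∧ L.lt p.1 p.2}.ncard := by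
  set I₁ := {p : α × α | (¬ p.1 ≤ p.2 ∧ ¬ p.2 ≤ p.1) ∧ L.lt p.1 p.2}
  have hsplit : {p : α × α | ¬ p.1 ≤ p.2 ∧ ¬ p.2 ≤ p.1} = I₁ ∪ Prod.swap ⁻¹' I₁ := by
    ext ⟨x, y⟩
    simp only [Set.mem_ofPred_eq, Set.mem_union, Set.mem_preimage, Prod.fst_swap, Prod.snd_swap, I₁]
    constructor
    · intro h
      rcases @lt_trichotomy _ L x y with hxy | rfl | hyx
      · exact Or.inl ⟨h, hxy⟩
      · exact absurd le_rfl h.1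
      · exact Or.inr ⟨h.symm, hyx⟩
    · rintro (⟨h, -⟩ | ⟨h, -⟩)
      exacts [h, h.symm]
  have hdisj : Disjoint I₁ (Prod.swap ⁻¹' I₁) :=
    Set.disjoint_left.2 fun _ hp hp' => @lt_asymm _ L.toPreorder _ _ hp.2 hp'.2
  rw [numInc, hsplit, Set.ncard_union_eq hdisj, Set.ncard_preimage_of_injective_subset_range
    Prod.swap_injective (by simp [Prod.swap_surjective.range_eq])]
  omega

lemma extDist_add_ncard_le [Finite α] (hL1 : IsLinearExtension L1) (hL2 : IsLinearExtension L2)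
    {S : Set (α × α)}
    (hS : ∀ p ∈ S, (¬ p.1 ≤ p.2 ∧ ¬ p.2 ≤ p.1) ∧ L1.lt p.1 p.2 ∧ ¬ Reverses L1 L2 p.1 p.2) :
    extDist L1 L2 + S.ncard ≤ numInc α := by
  set R := {p : α × α | L1.lt p.1 p.2 ∧ L2.lt p.2 p.1}
  have hdisj : Disjoint R S :=
    Set.disjoint_left.2 fun p hpR hpS => (hS p hpS).2.2 (Or.inl hpR)
  have hsub : R ∪ S ⊆ {p : α × α | (¬ p.1 ≤ p.2 ∧ ¬ p.2 ≤ p.1) ∧ L1.lt p.1 p.2} := by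
    rintro p (hp | hp)
    exacts [⟨incomparable_of_lt_of_lt hL1 hL2 hp.1 hp.2, hp.1⟩, ⟨(hS p hp).1, (hS p hp).2.1⟩]
  rw [numInc_eq_ncard_lt L1, extDist, ← Set.ncard_union_eq hdisj]
  exact Set.ncard_le_ncard hsub

omit [PartialOrder α] in
lemma Reverses.lt_of_lt {x y : α} (h : Reverses L1 L2 x y) (hxy : L1.lt x y) : L2.lt y x :=
  h.elim And.right fun h' => absurd hxy (@lt_asymm _ L1.toPreorder _ _ h'.1)

lemma not_reverses_of_between (hL1 : IsLinearExtension L1) (hL2 : IsLinearExtension L2)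
    {w x y z : α} (hwx : w ≤ x) (hwz : w ≤ z) (hxy : L1.lt x y) (hyz : L1.lt y z)
    (hrev : Reverses L1 L2 y z) : ¬ Reverses L1 L2 w y := fun hrev' =>
  have hzy : L2.lt z y := hrev.lt_of_lt hyz
  have hyw : L2.lt y w :=
    hrev'.lt_of_lt (@lt_of_le_of_lt _ L1.toPreorder _ _ _ (hL1 w x hwx) hxy)
  @not_le_of_gt _ L2.toPreorder _ _ (@lt_trans _ L2.toPreorder _ _ _ hzy hyw) (hL2 w z hwz)

end LinearExtension

lemma card_filter_snd_eq_fst_add_one (n : ℕ) :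
    #{q : Fin (n + 1) × Fin (n + 1) | (q.2 : ℕ) = q.1 + 1} = n := by
  have hinj : Function.Injective fun j : Fin n => (j.castSucc, j.succ) :=
    fun i j h => Fin.castSucc_injective n (congrArg Prod.fst h)
  have : ({q : Fin (n + 1) × Fin (n + 1) | (q.2 : ℕ) = q.1 + 1} : Finset _) =
      univ.image fun j : Fin n => (j.castSucc, j.succ) := by
    ext ⟨⟨a, ha⟩, ⟨b, hb⟩⟩
    simp only [mem_filter, mem_univ, true_and, mem_image, Prod.ext_iff, Fin.ext_iff,
      Fin.val_castSucc, Fin.val_succ]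
    exact ⟨fun h => ⟨⟨a, by omega⟩, rfl, h.symm⟩, fun ⟨j, hja, hjb⟩ => by omega⟩
  rw [this, card_image_of_injective _ hinj, card_univ, Fintype.card_fin]

lemma card_filter_fst_eq_snd_add_one (n : ℕ) :
    #{q : Fin (n + 1) × Fin (n + 1) | (q.1 : ℕ) = q.2 + 1} = n := by
  refine (card_equiv (Equiv.prodComm _ _) fun q => ?_).trans (card_filter_snd_eq_fst_add_one n)
  simp

lemma card_filter_fst_eq_snd (n : ℕ) : #{q : Fin n × Fin n | q.1 = q.2} = n := by
  have : ({q : Fin n × Fin n | q.1 = q.2} : Finset _) = univ.diag := by ext; simp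
  rw [this, diag_card, card_univ, Fintype.card_fin]

/-- A type synonym carrying `Worder k` as its instance: on `Fin (k + 1) × Fin 3` itself,
instance search would find the product order. -/
def W (k : ℕ) : Type := Fin (k + 1) × Fin 3

instance (k : ℕ) : PartialOrder (W k) := Worder k

instance (k : ℕ) : Finite (W k) := inferInstanceAs (Finite (Fin (k + 1) × Fin 3))

lemma Wle_of_val_eq_succ {k : ℕ} {i i' : Fin (k + 1)} (h : (i' : ℕ) = i + 1) {m m' : Fin 3}
    (hm : m' ≠ m + 1) : Wle k (i, m) (i', m') :=
  Or.inr (Or.inl ⟨h, by simpa [Fin.ext_iff, Fin.val_add] using hm⟩)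

lemma Wle_incomparable_iff {k : ℕ} {x y : Fin (k + 1) × Fin 3} :
    (¬ Wle k x y ∧ ¬ Wle k y x) ↔ (x.1 = y.1 ∧ x.2 ≠ y.2) ∨
      ((y.1 : ℕ) = x.1 + 1 ∧ y.2 = x.2 + 1) ∨ ((x.1 : ℕ) = y.1 + 1 ∧ x.2 = y.2 + 1) := by
  obtain ⟨⟨i, hi⟩, ⟨m, hm⟩⟩ := x
  obtain ⟨⟨i', hi'⟩, ⟨m', hm'⟩⟩ := y
  simp only [Wle, Prod.ext_iff, Fin.ext_iff, ne_eq, not_or, not_and, not_le, Fin.val_add,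
    Fin.val_one, Fin.isValue]
  omega

lemma ncard_Wle_incomparable (k : ℕ) :
    {p : (Fin (k + 1) × Fin 3) × (Fin (k + 1) × Fin 3) |
      ¬ Wle k p.1 p.2 ∧ ¬ Wle k p.2 p.1}.ncard = 12 * k + 6 := by
  set A : Finset ((Fin (k + 1) × Fin (k + 1)) × (Fin 3 × Fin 3)) :=
    ({q : Fin (k + 1) × Fin (k + 1) | q.1 = q.2} : Finset _) ×ˢ
      ({q : Fin 3 × Fin 3 | q.1 ≠ q.2} : Finset _)
  set B : Finset ((Fin (k + 1) × Fin (k + 1)) × (Fin 3 × Fin 3)) :=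
    ({q : Fin (k + 1) × Fin (k + 1) | (q.2 : ℕ) = q.1 + 1} : Finset _) ×ˢ
      ({q : Fin 3 × Fin 3 | q.2 = q.1 + 1} : Finset _)
  set C : Finset ((Fin (k + 1) × Fin (k + 1)) × (Fin 3 × Fin 3)) :=
    ({q : Fin (k + 1) × Fin (k + 1) | (q.1 : ℕ) = q.2 + 1} : Finset _) ×ˢ
      ({q : Fin 3 × Fin 3 | q.1 = q.2 + 1} : Finset _)
  have hAB : Disjoint A B := disjoint_left.2 fun q hA hB => by
    simp only [A, B, mem_product, mem_filter, mem_univ, true_and] at hA hB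
    have := congrArg Fin.val hA.1; omega
  have hABC : Disjoint (A ∪ B) C := disjoint_left.2 fun q hAB hC => by
    simp only [A, B, C, mem_union, mem_product, mem_filter, mem_univ, true_and] at hAB hC
    rcases hAB with hA | hB
    · have := congrArg Fin.val hA.1; omega
    · omega
  -- Reindexed by (pair of levels, pair of colours), the incomparable pairs form three products.
  have hI : {p : (Fin (k + 1) × Fin 3) × (Fin (k + 1) × Fin 3) |
      ¬ Wle k p.1 p.2 ∧ ¬ Wle k p.2 p.1} =
      Equiv.prodProdProdComm _ _ _ _ ⁻¹' ↑(A ∪ B ∪ C) := by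
    ext p
    simp [A, B, C, Wle_incomparable_iff]
  rw [hI, Set.ncard_preimage_of_injective_subset_range (Equiv.injective _) (by simp),
    Set.ncard_coe_finset, card_union_of_disjoint hABC, card_union_of_disjoint hAB]
  simp only [A, B, C, card_product, card_filter_fst_eq_snd, card_filter_snd_eq_fst_add_one,
    card_filter_fst_eq_snd_add_one]
  have h6 : #{q : Fin 3 × Fin 3 | q.1 ≠ q.2} = 6 := by decide
  have h3 : #{q : Fin 3 × Fin 3 | q.2 = q.1 + 1} = 3 := by decide
  have h3' : #{q : Fin 3 × Fin 3 | q.1 = q.2 + 1} = 3 := by decide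
  rw [h6, h3, h3']
  ring

lemma W.not_all_reversed {k : ℕ} {L1 L2 : LinearOrder (W k)}
    (hL1 : IsLinearExtension L1) (hL2 : IsLinearExtension L2)
    {i i' : Fin (k + 1)} (h : (i' : ℕ) = i + 1) :
    ¬ (Reverses L1 L2 (i', 0) (i', 1) ∧ Reverses L1 L2 (i', 0) (i', 2) ∧
       Reverses L1 L2 (i', 1) (i', 2) ∧ Reverses L1 L2 (i, 0) (i', 1) ∧
       Reverses L1 L2 (i, 1) (i', 2) ∧ Reverses L1 L2 (i, 2) (i', 0)) := by
  rintro ⟨r01, r02, r12, r0, r1, r2⟩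
  -- `y` is the `L1`-middle element of level `i'`, and `(i, w)` is the element below `x` and `z`.
  have between : ∀ {x y z w : Fin 3}, x ≠ w + 1 → z ≠ w + 1 → L1.lt (i', x) (i', y) →
      L1.lt (i', y) (i', z) → Reverses L1 L2 (i', y) (i', z) → ¬ Reverses L1 L2 (i, w) (i', y) :=
    fun hx hz =>
      not_reverses_of_between hL1 hL2 (Wle_of_val_eq_succ h hx) (Wle_of_val_eq_succ h hz)
  have ne {m m' : Fin 3} (hm : m ≠ m') : ((i', m) : W k) ≠ (i', m') :=
    fun e => hm (congrArg Prod.snd e)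
  rcases @lt_or_gt_of_ne _ L1 _ _ (ne (m := 0) (m' := 1) (by decide)) with h01 | h10
  · rcases @lt_or_gt_of_ne _ L1 _ _ (ne (m := 1) (m' := 2) (by decide)) with h12 | h21
    · exact between (by decide) (by decide) h01 h12 r12 r0
    · rcases @lt_or_gt_of_ne _ L1 _ _ (ne (m := 0) (m' := 2) (by decide)) with h02 | h20
      · exact between (by decide) (by decide) h02 h21 r12.symm r1
      · exact between (by decide) (by decide) h20 h01 r01 r2
  · rcases @lt_or_gt_of_ne _ L1 _ _ (ne (m := 1) (m' := 2) (by decide)) with h12 | h21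
    · rcases @lt_or_gt_of_ne _ L1 _ _ (ne (m := 0) (m' := 2) (by decide)) with h02 | h20
      · exact between (by decide) (by decide) h10 h02 r02 r2
      · exact between (by decide) (by decide) h12 h20 r02.symm r1
    · exact between (by decide) (by decide) h21 h10 r01.symm r0

lemma W.numInc_eq (k : ℕ) : numInc (W k) = 6 * k + 3 := by
  change {p : (Fin (k + 1) × Fin 3) × (Fin (k + 1) × Fin 3) |
    ¬ Wle k p.1 p.2 ∧ ¬ Wle k p.2 p.1}.ncard / 2 = _
  rw [ncard_Wle_incomparable]
  omega

lemma W.exists_unreversed {k : ℕ} {L1 L2 : LinearOrder (W k)}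
    (hL1 : IsLinearExtension L1) (hL2 : IsLinearExtension L2) (j : Fin k) :
    ∃ p : W k × W k, ((¬ p.1 ≤ p.2 ∧ ¬ p.2 ≤ p.1) ∧ L1.lt p.1 p.2 ∧ ¬ Reverses L1 L2 p.1 p.2) ∧
      max (p.1.1 : ℕ) p.2.1 = j + 1 := by
  obtain ⟨x, y, hxy, htop, hrev⟩ : ∃ x y : W k, (¬ x ≤ y ∧ ¬ y ≤ x) ∧
      max (x.1 : ℕ) y.1 = j + 1 ∧ ¬ Reverses L1 L2 x y := by
    by_contra! hall
    refine W.not_all_reversed hL1 hL2 (i := j.castSucc) (i' := j.succ) (by simp)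
      ⟨hall _ _ ?_ ?_, hall _ _ ?_ ?_, hall _ _ ?_ ?_, hall _ _ ?_ ?_, hall _ _ ?_ ?_,
        hall _ _ ?_ ?_⟩
    all_goals first
      | exact Wle_incomparable_iff.2 (by simp)
      | simp
  have hne : x ≠ y := fun e => hxy.1 (e ▸ le_rfl)
  rcases @lt_or_gt_of_ne _ L1 x y hne with hlt | hgt
  · exact ⟨(x, y), ⟨hxy, hlt, hrev⟩, htop⟩
  · exact ⟨(y, x), ⟨hxy.symm, hgt, fun h => hrev h.symm⟩, max_comm (x.1 : ℕ) y.1 ▸ htop⟩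

/-- In `W_k`, the stack of `k` standard examples: `inc(W_k) = 6k + 3`, and for any pair
of linear extensions, for each level `j + 1` (with `j < k`) the six incomparable pairs
`(a_{j+1},b_{j+1})`, `(a_{j+1},c_{j+1})`, `(b_{j+1},c_{j+1})`, `(a_j,b_{j+1})`,
`(b_j,c_{j+1})`, `(c_j,a_{j+1})` are never all reversed; hence
`led(W_k) ≤ 5k + 3` and so `RR(W_k) ≤ (5k+3)/(6k+3)`. -/
theorem RR_W_upper (k : ℕ) :
    @numInc (Fin (k + 1) × Fin 3) (Worder k) = 6 * k + 3 ∧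
    ∀ L1 L2 : LinearOrder (Fin (k + 1) × Fin 3),
      @IsLinearExtension _ (Worder k) L1 → @IsLinearExtension _ (Worder k) L2 →
      (∀ j : ℕ, (hj : j < k) →
        ¬ (Reverses L1 L2 (⟨j + 1, by omega⟩, 0) (⟨j + 1, by omega⟩, 1) ∧
           Reverses L1 L2 (⟨j + 1, by omega⟩, 0) (⟨j + 1, by omega⟩, 2) ∧
           Reverses L1 L2 (⟨j + 1, by omega⟩, 1) (⟨j + 1, by omega⟩, 2) ∧
           Reverses L1 L2 (⟨j, by omega⟩, 0) (⟨j + 1, by omega⟩, 1) ∧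
           Reverses L1 L2 (⟨j, by omega⟩, 1) (⟨j + 1, by omega⟩, 2) ∧
           Reverses L1 L2 (⟨j, by omega⟩, 2) (⟨j + 1, by omega⟩, 0))) ∧
      extDist L1 L2 ≤ 5 * k + 3 := by
  refine ⟨W.numInc_eq k, fun L1 L2 hL1 hL2 => ⟨fun j hj => W.not_all_reversed hL1 hL2 rfl, ?_⟩⟩
  choose p hp htop using W.exists_unreversed hL1 hL2
  have hp_inj : Function.Injective p := fun i j hij => Fin.ext <| by
    have := htop i; rw [hij, htop j] at this; omega
  have hbound : extDist L1 L2 + (Set.range p).ncard ≤ numInc (W k) :=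
    extDist_add_ncard_le (α := W k) hL1 hL2 (Set.forall_mem_range.2 hp)
  rw [Set.ncard_range_of_injective hp_inj, Nat.card_eq_fintype_card, Fintype.card_fin,
    W.numInc_eq] at hbound
  omega
end
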